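/- Consider n cars and n spots where each car, upon finding its preferred spot a_i occupied, first checks spot a_i − 1 (if a_i > 1) and parks there if empty, and otherwise continues forward from a_i to the first empty spot. Then every classical parking function is also a parking function in this backward-one-step model (the set of classical parking functions is contained in the set of backward-one-step parking functions). -/

import Mathlib

/-- The first unoccupied spot with index `≥ p` among spots `1,…,n`. -/
def firstFree (n : ℕ) (occ : Finset ℕ) (p : ℕ) : Option ℕ :=
  let s := (Finset.Icc p n).filter (fun x => x ∉ occ)
  if h : s.Nonempty then some (s.min' h) else none

/-- The classical parking process: cars park in order, each taking the first
unoccupied spot `≥` its preference; returns the list of spots taken in order,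
or `none` if some car cannot park. -/
def parkOutcome (n : ℕ) : List ℕ → Finset ℕ → Option (List ℕ)
  | [], _ => some []
  | p :: ps, occ =>
    match firstFree n occ p with
    | none => none
    | some s => (parkOutcome n ps (insert s occ)).map (s :: ·)

/-- A preference list is a parking function iff every car parks. -/
def IsParkingList (n : ℕ) (l : List ℕ) : Prop := (parkOutcome n l ∅).isSome

/-- Naples (backward-one-step) rule: car tries spot `p`; if occupied it checks
spot `p - 1` (when `p ≥ 2`) and otherwise goes forward from `p + 1`. -/
def naplesStep (n : ℕ) (occ : Finset ℕ) (p : ℕ) : Option ℕ :=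
  if p ≤ n ∧ p ∉ occ then some p
  else if 2 ≤ p ∧ p - 1 ∉ occ then some (p - 1)
  else firstFree n occ (p + 1)

/-- The Naples parking process. -/
def naplesOutcome (n : ℕ) : List ℕ → Finset ℕ → Option (List ℕ)
  | [], _ => some []
  | p :: ps, occ =>
    match naplesStep n occ p with
    | none => none
    | some s => (naplesOutcome n ps (insert s occ)).map (s :: ·)

/-!
Run both processes on the same preferences and compare their sets of free spots, `A` for the
classical one and `B` for the Naples one. The invariant is suffix dominance: for every `t`, `B`
has at least as many free spots `≥ t` as `A`. When the classical car takes `c ≥ p`, the Naples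
car takes `p` or `p - 1`, both `≤ c`; failing that, `B` has no free spot in `[q, p]` (with
`q = p - 1`, or `q = p` when `p < 2`), so dominance at `q ≤ c` gives a free spot `> p` in `B`,
and the car takes the least one. Either way the Naples spot `s` is the least free spot of `B`
above some `q ≤ c`, and that is exactly what makes removing `c` from `A` and `s` from `B`
preserve the invariant.
-/

open Finset

def SuffixDominates {α : Type*} [LinearOrder α] (B A : Finset α) : Prop :=
  ∀ t, #{x ∈ A | t ≤ x} ≤ #{x ∈ B | t ≤ x}

theorem SuffixDominates.erase_erase {α : Type*} [LinearOrder α] {A B : Finset α} {c s q : α}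
    (hAB : SuffixDominates B A) (hc : c ∈ A) (hs : s ∈ B) (hqc : q ≤ c)
    (hgap : ∀ x ∈ B, q ≤ x → s ≤ x) :
    SuffixDominates (B.erase s) (A.erase c) := by
  intro t
  rw [filter_erase, filter_erase]
  by_cases hts : t ≤ s
  · have hsB : s ∈ {x ∈ B | t ≤ x} := mem_filter.mpr ⟨hs, hts⟩
    rw [card_erase_of_mem hsB]
    by_cases htc : t ≤ c
    · rw [card_erase_of_mem (mem_filter.mpr ⟨hc, htc⟩)]
      exact Nat.sub_le_sub_right (hAB t) 1
    · -- `c < t ≤ s`: `c` is counted in `A` above `q`, and `B` has nothing in `[q, t)`.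
      have hcA : c ∉ {x ∈ A | t ≤ x} := fun h => htc (mem_filter.mp h).2
      rw [erase_eq_of_notMem hcA]
      have hBq : {x ∈ B | q ≤ x} = {x ∈ B | t ≤ x} := by
        ext x
        simp only [mem_filter]
        exact ⟨fun ⟨hx, hqx⟩ => ⟨hx, hts.trans (hgap x hx hqx)⟩,
          fun ⟨hx, htx⟩ => ⟨hx, hqc.trans ((not_le.mp htc).le.trans htx)⟩⟩
      have hAq : insert c {x ∈ A | t ≤ x} ⊆ {x ∈ A | q ≤ x} := by
        intro x hx
        rcases mem_insert.mp hx with rfl | hx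
        · exact mem_filter.mpr ⟨hc, hqc⟩
        · exact mem_filter.mpr ⟨(mem_filter.mp hx).1,
            hqc.trans ((not_le.mp htc).le.trans (mem_filter.mp hx).2)⟩
      have := card_le_card hAq
      rw [card_insert_of_notMem hcA] at this
      have := hAB q
      rw [hBq] at this
      omega
  · rw [erase_eq_of_notMem fun h => hts (mem_filter.mp h).2]
    exact card_erase_le.trans (hAB t)

abbrev freeSpots (n : ℕ) (occ : Finset ℕ) : Finset ℕ := Iic n \ occ

theorem freeSpots_insert (n : ℕ) (occ : Finset ℕ) (s : ℕ) :
    freeSpots n (insert s occ) = (freeSpots n occ).erase s :=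
  sdiff_insert _ _ _

theorem firstFree_eq (n : ℕ) (occ : Finset ℕ) (p : ℕ) :
    firstFree n occ p =
      if h : {x ∈ freeSpots n occ | p ≤ x}.Nonempty then some (min' _ h) else none := by
  have : {x ∈ freeSpots n occ | p ≤ x} = (Icc p n).filter (· ∉ occ) := by
    ext x
    simp only [mem_filter, mem_sdiff, mem_Iic, mem_Icc]
    tauto
  simp only [firstFree, this]

theorem mem_freeSpots_of_firstFree_eq_some {n : ℕ} {occ : Finset ℕ} {p c : ℕ}
    (h : firstFree n occ p = some c) : c ∈ freeSpots n occ ∧ p ≤ c := by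
  rw [firstFree_eq] at h
  split_ifs at h with hne
  cases h
  exact mem_filter.mp (min'_mem _ hne)

theorem exists_firstFree_eq_some {n : ℕ} {occ : Finset ℕ} {p x : ℕ}
    (hx : x ∈ freeSpots n occ) (hpx : p ≤ x) :
    ∃ s, firstFree n occ p = some s ∧ s ∈ freeSpots n occ ∧
      ∀ y ∈ freeSpots n occ, p ≤ y → s ≤ y := by
  have hne : {y ∈ freeSpots n occ | p ≤ y}.Nonempty := ⟨x, mem_filter.mpr ⟨hx, hpx⟩⟩
  refine ⟨_, by rw [firstFree_eq, dif_pos hne], (mem_filter.mp (min'_mem _ hne)).1,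
    fun y hy hpy => min'_le _ y (mem_filter.mpr ⟨hy, hpy⟩)⟩

theorem exists_naplesStep_eq_some {n : ℕ} {occC occN : Finset ℕ} {p c : ℕ}
    (hdom : SuffixDominates (freeSpots n occN) (freeSpots n occC))
    (hc : firstFree n occC p = some c) :
    ∃ s, naplesStep n occN p = some s ∧
      SuffixDominates (freeSpots n (insert s occN)) (freeSpots n (insert c occC)) := by
  obtain ⟨hcC, hpc⟩ := mem_freeSpots_of_firstFree_eq_some hc
  have hcn : c ≤ n := mem_Iic.mp (mem_sdiff.mp hcC).1
  simp only [freeSpots_insert]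
  by_cases hp : p ≤ n ∧ p ∉ occN
  · refine ⟨p, by simp [naplesStep, hp], hdom.erase_erase hcC ?_ hpc fun _ _ h => h⟩
    simpa using hp
  by_cases hp₁ : 2 ≤ p ∧ p - 1 ∉ occN
  · refine ⟨p - 1, by simp [naplesStep, hp, hp₁],
      hdom.erase_erase hcC ?_ (by omega) fun _ _ h => h⟩
    simp only [mem_sdiff, mem_Iic]
    exact ⟨by omega, hp₁.2⟩
  -- Neither `p` nor (for `p ≥ 2`) `p - 1` is free, so `B` has nothing in `[q, p]`.
  obtain ⟨q, hqp, hgap⟩ : ∃ q ≤ p, ∀ x ∈ freeSpots n occN, q ≤ x → p + 1 ≤ x := by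
    refine ⟨if 2 ≤ p then p - 1 else p, by split_ifs <;> omega, fun x hx hqx => ?_⟩
    simp only [mem_sdiff, mem_Iic] at hx
    have : x ≠ p := by rintro rfl; exact hp hx
    split_ifs at hqx with h2
    · have : x ≠ p - 1 := by rintro rfl; exact hp₁ ⟨h2, hx.2⟩
      omega
    · omega
  have hqc : q ≤ c := hqp.trans hpc
  obtain ⟨x, hxN, hqx⟩ : ∃ x ∈ freeSpots n occN, q ≤ x := by
    have hcq : 0 < #{x ∈ freeSpots n occC | q ≤ x} :=
      card_pos.mpr ⟨c, mem_filter.mpr ⟨hcC, hqc⟩⟩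
    obtain ⟨x, hx⟩ := card_pos.mp (hcq.trans_le (hdom q))
    exact ⟨x, (mem_filter.mp hx).1, (mem_filter.mp hx).2⟩
  obtain ⟨s, hs, hsN, hsmin⟩ := exists_firstFree_eq_some hxN (hgap x hxN hqx)
  exact ⟨s, by simp [naplesStep, hp, hp₁, hs],
    hdom.erase_erase hcC hsN hqc fun y hy hqy => hsmin y hy (hgap y hy hqy)⟩

theorem naplesOutcome_isSome_of_parkOutcome_isSome (n : ℕ) (l : List ℕ) {occC occN : Finset ℕ}
    (hdom : SuffixDominates (freeSpots n occN) (freeSpots n occC))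
    (h : (parkOutcome n l occC).isSome) : (naplesOutcome n l occN).isSome := by
  induction l generalizing occC occN with
  | nil => rfl
  | cons p ps ih =>
    rw [parkOutcome] at h
    rcases hc : firstFree n occC p with _ | c
    · simp [hc] at h
    obtain ⟨s, hs, hdom'⟩ := exists_naplesStep_eq_some hdom hc
    simp only [hc, Option.isSome_map] at h
    simpa only [naplesOutcome, hs, Option.isSome_map] using ih hdom' h

theorem classical_subset_naples_general (n : ℕ) (a : Fin n → ℕ)
    (h : (parkOutcome n (List.ofFn a) ∅).isSome) :
    (naplesOutcome n (List.ofFn a) ∅).isSome :=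
  naplesOutcome_isSome_of_parkOutcome_isSome n _ (fun _ => le_rfl) h

/-- Every classical parking function is a Naples (backward-one-step) parking function. -/
theorem classical_subset_naples (n : ℕ) (a : Fin n → ℕ)
    (ha : ∀ i, a i ∈ Finset.Icc 1 n)
    (h : (parkOutcome n (List.ofFn a) ∅).isSome) :
    (naplesOutcome n (List.ofFn a) ∅).isSome :=
  classical_subset_naples_general n a h
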